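/- Any continuous function Φ : [−M, M]^m → ℝ^n on a compact box can be uniformly approximated to any accuracy ε in the ℓ∞ norm by a two-layer feedforward neural network with a non-polynomial continuous activation function. -/

import Mathlib

/-!
Let `S` be the closure in `C(K, ℝ)` of the span of the ridge functions `x ↦ σ (ℓ x + θ)`.
Convolving `σ` with a bump function `φ` keeps all shifts inside `S`, and differentiating
`c ↦ g (c * ℓ x + θ)` `k` times at `c = 0`, for the smooth `g = φ ⋆ σ`, puts
`x ↦ (ℓ x) ^ k * g⁽ᵏ⁾ θ` in `S`. Since `σ` is not a polynomial, some `g⁽ᵏ⁾ θ` is nonzero: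
otherwise every `φ ⋆ σ` lies in the finite-dimensional, hence closed, space of polynomial
functions of degree `< k`, and so does their pointwise limit `σ`. So every `(ℓ x) ^ k`, and
hence every `exp (ℓ x)`, lies in `S`; these exponentials span a subalgebra separating points,
so `S` is everything by Stone–Weierstrass. The `n` outputs are approximated separately and
their hidden layers are put side by side.
-/

open MeasureTheory Set Filter Topology
open scoped Convolution ContDiff

theorem Submodule.integral_mem_of_isClosed {α E : Type*} [MeasurableSpace α]
    [NormedAddCommGroup E] [NormedSpace ℝ E] [CompleteSpace E] {μ : Measure α}
    {S : Submodule ℝ E} (hS : IsClosed (S : Set E)) {Ψ : α → E} (h : ∀ y, Ψ y ∈ S) :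
    ∫ y, Ψ y ∂μ ∈ S := by
  by_cases hΨ : Integrable Ψ μ
  swap
  · rw [integral_undef hΨ]; exact S.zero_mem
  by_contra hnot
  obtain ⟨f, u, hfS, hfu⟩ := geometric_hahn_banach_closed_point S.convex hS hnot
  -- a functional bounded above on a submodule vanishes on it
  have hf : ∀ a ∈ S, f a = 0 := fun a ha => by
    by_contra hfa
    have := hfS (((u + 1) / f a) • a) (S.smul_mem _ ha)
    rw [map_smul, smul_eq_mul, div_mul_cancel₀ _ hfa] at this
    linarith [hfS 0 S.zero_mem]
  have : f (∫ y, Ψ y ∂μ) = 0 := by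
    rw [← f.integral_comp_comm hΨ]
    simp [hf _ (h _)]
  linarith [hfS 0 S.zero_mem, f.map_zero]

theorem Submodule.mem_of_hasDerivAt {E : Type*} [NormedAddCommGroup E] [NormedSpace ℝ E]
    {S : Submodule ℝ E} (hS : IsClosed (S : Set E)) {F : ℝ → E} {F' : E} {s : ℝ}
    (hF : HasDerivAt F F' s) (hmem : ∀ t, F t ∈ S) : F' ∈ S := by
  have hclosure := range_deriv_subset_closure_span_image F dense_univ ⟨s, hF.deriv⟩
  refine closure_minimal ?_ hS hclosure
  exact Submodule.span_le.2 (image_subset_iff.2 fun t _ => hmem t)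

theorem Submodule.exp_mem_of_forall_pow_mem {A : Type*} [NormedRing A] [NormedAlgebra ℝ A]
    [CompleteSpace A] {S : Submodule ℝ A} (hS : IsClosed (S : Set A)) {a : A}
    (h : ∀ k, a ^ k ∈ S) : NormedSpace.exp a ∈ S :=
  hS.mem_of_tendsto (NormedSpace.exp_series_hasSum_exp' (𝕂 := ℝ) a).tendsto_sum_nat
    (Eventually.of_forall fun _ => S.sum_mem fun k _ => S.smul_mem _ (h k))

def polyFunctionsDegreeLT (k : ℕ) : Submodule ℝ (ℝ → ℝ) :=
  Submodule.span ℝ (range fun j : Fin k => fun x : ℝ => x ^ (j : ℕ))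

theorem mem_polyFunctionsDegreeLT_of_iteratedDeriv_eq_zero {k : ℕ} {g : ℝ → ℝ}
    (hg : ContDiff ℝ ∞ g) (h : iteratedDeriv k g = 0) : g ∈ polyFunctionsDegreeLT k := by
  induction k generalizing g with
  | zero => simp_all
  | succ k ih =>
    rw [iteratedDeriv_succ'] at h
    obtain ⟨a, ha⟩ := (Submodule.mem_span_range_iff_exists_fun ℝ).1
      (ih (contDiff_infty_iff_deriv.1 hg).2 h)
    let G : ℝ → ℝ := fun x => ∑ j : Fin k, a j / (j + 1) * x ^ ((j : ℕ) + 1)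
    have hG : ∀ x, HasDerivAt G (deriv g x) x := fun x => by
      rw [← ha]
      refine (HasDerivAt.fun_sum (u := Finset.univ) fun (j : Fin k) _ =>
        (hasDerivAt_pow ((j : ℕ) + 1) x).const_mul (a j / (j + 1))).congr_deriv ?_
      simp only [Finset.sum_apply, Pi.smul_apply, smul_eq_mul]
      refine Finset.sum_congr rfl fun j _ => ?_
      push_cast
      field_simp
    have hg_diff : Differentiable ℝ g := hg.differentiable (by simp)
    have hconst : ∀ x, g x - G x = g 0 - G 0 := fun x =>
      is_const_of_deriv_eq_zero (hg_diff.sub fun x => (hG x).differentiableAt)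
        (fun x => ((hg_diff x).hasDerivAt.sub (hG x)).deriv.trans (sub_self _)) x 0
    have hg_eq : g = (g 0 - G 0) • (fun x : ℝ => x ^ ((0 : Fin (k + 1)) : ℕ)) +
        ∑ j : Fin k, (a j / (j + 1)) • fun x : ℝ => x ^ ((j.succ : Fin (k + 1)) : ℕ) := by
      ext x
      simp only [Pi.add_apply, Finset.sum_apply, Pi.smul_apply, smul_eq_mul, Fin.val_zero,
        pow_zero, mul_one, Fin.val_succ]
      linarith [hconst x]
    rw [hg_eq]
    exact add_mem (Submodule.smul_mem _ _ (Submodule.subset_span ⟨0, rfl⟩))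
      (Submodule.sum_mem _ fun j _ => Submodule.smul_mem _ _ (Submodule.subset_span ⟨j.succ, rfl⟩))

theorem ContDiffBump.contDiff_normed_convolution (φ : ContDiffBump (0 : ℝ)) {σ : ℝ → ℝ}
    (hσ : Continuous σ) : ContDiff ℝ ∞ (φ.normed volume ⋆[ContinuousLinearMap.lsmul ℝ ℝ] σ) :=
  φ.hasCompactSupport_normed.contDiff_convolution_left _ φ.contDiff_normed hσ.locallyIntegrable

theorem exists_iteratedDeriv_convolution_ne_zero {σ : ℝ → ℝ} (hσ : Continuous σ)
    (hσp : ∀ p : Polynomial ℝ, σ ≠ fun x => p.eval x) (k : ℕ) :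
    ∃ (φ : ContDiffBump (0 : ℝ)) (θ : ℝ),
      iteratedDeriv k (φ.normed volume ⋆[ContinuousLinearMap.lsmul ℝ ℝ] σ) θ ≠ 0 := by
  by_contra! h
  have : FiniteDimensional ℝ (polyFunctionsDegreeLT k) :=
    FiniteDimensional.span_of_finite ℝ (finite_range _)
  have hclosed : IsClosed (polyFunctionsDegreeLT k : Set (ℝ → ℝ)) :=
    Submodule.closed_of_finiteDimensional _
  let φ : ℕ → ContDiffBump (0 : ℝ) := fun i =>
    ⟨1 / (i + 1), 2 / (i + 1), by positivity, by gcongr; norm_num⟩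
  have hφ : Tendsto (fun i => (φ i).rOut) atTop (𝓝 0) := by
    simpa [φ, div_eq_mul_inv] using (tendsto_one_div_add_atTop_nhds_zero_nat (𝕜 := ℝ)).const_mul 2
  have hlim : Tendsto (fun i => (φ i).normed volume ⋆[ContinuousLinearMap.lsmul ℝ ℝ] σ) atTop
      (𝓝 σ) :=
    tendsto_pi_nhds.2 (ContDiffBump.convolution_tendsto_right_of_continuous hφ hσ)
  have hσ_mem : σ ∈ polyFunctionsDegreeLT k := hclosed.mem_of_tendsto hlim
    (Eventually.of_forall fun i => mem_polyFunctionsDegreeLT_of_iteratedDeriv_eq_zero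
      ((φ i).contDiff_normed_convolution hσ) (funext (h (φ i))))
  obtain ⟨a, ha⟩ := (Submodule.mem_span_range_iff_exists_fun ℝ).1 hσ_mem
  refine hσp (∑ j, Polynomial.C (a j) * Polynomial.X ^ (j : ℕ)) ?_
  ext x
  simp [← ha, Polynomial.eval_finsetSum]

section ContinuousFunctions

variable {K : Type*} [TopologicalSpace K] [CompactSpace K]

theorem ContinuousMap.hasDerivAt_of_hasDerivAt_apply {F G : ℝ → C(K, ℝ)} (hG : Continuous G)
    (hF : ∀ x s, HasDerivAt (fun s => F s x) (G s x) s) (s : ℝ) : HasDerivAt F (G s) s := by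
  rw [hasDerivAt_iff_isLittleO, Asymptotics.isLittleO_iff]
  intro ε hε
  obtain ⟨δ, hδ, hG_near⟩ := Metric.continuousAt_iff.1 hG.continuousAt ε hε
  filter_upwards [Metric.ball_mem_nhds s hδ] with t ht
  refine (ContinuousMap.norm_le _ (by positivity)).2 fun x => ?_
  -- mean value inequality for `r ↦ F r x - r * G s x` on the ball of radius `δ`
  have hmvt := (convex_ball s δ).norm_image_sub_le_of_norm_hasDerivWithin_le
    (f := fun r => F r x - r * G s x) (f' := fun r => G r x - G s x)
    (fun r _ => ((hF x r).sub (hasDerivAt_mul_const (G s x))).hasDerivWithinAt)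
    (fun r hr => by
      simpa [← Real.dist_eq] using
        (ContinuousMap.dist_apply_le_dist x).trans (hG_near hr).le)
    (Metric.mem_ball_self hδ) ht
  calc ‖(F t - F s - (t - s) • G s) x‖ = ‖(F t x - t * G s x) - (F s x - s * G s x)‖ := by
        simp only [ContinuousMap.sub_apply, ContinuousMap.smul_apply, smul_eq_mul]; ring_nf
    _ ≤ ε * ‖t - s‖ := hmvt

theorem ContinuousMap.exp_apply (u : C(K, ℝ)) (x : K) :
    NormedSpace.exp u x = Real.exp (u x) := by
  rw [Real.exp_eq_exp_ℝ]
  exact NormedSpace.map_exp (ContinuousMap.evalAlgHom ℝ ℝ x) (continuous_eval_const x) u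

def ContainsWeightedShifts (S : Set C(K, ℝ)) (w u : C(K, ℝ)) (g : ℝ → ℝ) : Prop :=
  ∀ (c θ : ℝ) (F : C(K, ℝ)), (∀ x, F x = w x * g (c * u x + θ)) → F ∈ S

namespace ContainsWeightedShifts

variable {S : Submodule ℝ C(K, ℝ)} {w u : C(K, ℝ)} {g : ℝ → ℝ}

theorem deriv (hS : IsClosed (S : Set C(K, ℝ))) (hg : ContDiff ℝ 1 g)
    (h : ContainsWeightedShifts S w u g) : ContainsWeightedShifts S (w * u) u (deriv g) := by
  intro c θ F hF
  have hg' : Continuous (_root_.deriv g) := hg.continuous_deriv le_rfl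
  let Γ : ℝ → C(K, ℝ) := fun c => ⟨fun x => w x * g (c * u x + θ), by
    have := hg.continuous; fun_prop⟩
  let Γ' : ℝ → C(K, ℝ) := fun c => ⟨fun x => w x * u x * _root_.deriv g (c * u x + θ), by
    fun_prop⟩
  have hΓ' : Continuous Γ' := ContinuousMap.continuous_of_continuous_uncurry _ (by
    simp only [Γ', ContinuousMap.coe_mk]; fun_prop)
  have hderiv : ∀ x c, HasDerivAt (fun c => Γ c x) (Γ' c x) c := fun x c => by
    have hinner : HasDerivAt (fun c => c * u x + θ) (u x) c := (hasDerivAt_mul_const _).add_const θ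
    exact (((hg.differentiable one_ne_zero _).hasDerivAt.comp c hinner).const_mul (w x)).congr_deriv
      (by simp only [Γ', ContinuousMap.coe_mk]; ring)
  have hF' : F = Γ' c := by ext x; simp [hF, Γ']
  rw [hF']
  exact S.mem_of_hasDerivAt hS (ContinuousMap.hasDerivAt_of_hasDerivAt_apply hΓ' hderiv c)
    fun c => h c θ _ fun _ => rfl

theorem iteratedDeriv (hS : IsClosed (S : Set C(K, ℝ))) (hg : ContDiff ℝ ∞ g)
    (h : ContainsWeightedShifts S 1 u g) (k : ℕ) :
    ContainsWeightedShifts S (u ^ k) u (_root_.iteratedDeriv k g) := by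
  induction k with
  | zero => simpa using h
  | succ k ih =>
    rw [iteratedDeriv_succ, pow_succ]
    refine ih.deriv hS ?_
    rw [iteratedDeriv_eq_iterate]
    exact (hg.iterate_deriv k).of_le (by exact_mod_cast le_top)

theorem convolution (hS : IsClosed (S : Set C(K, ℝ))) (hg : Continuous g)
    (h : ContainsWeightedShifts S w u g) (φ : ContDiffBump (0 : ℝ)) :
    ContainsWeightedShifts S w u (φ.normed volume ⋆[ContinuousLinearMap.lsmul ℝ ℝ] g) := by
  intro c θ F hF
  let Γ : ℝ → C(K, ℝ) := fun y => ⟨fun x => w x * g (c * u x + θ - y), by fun_prop⟩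
  have hΓ : Continuous Γ := ContinuousMap.continuous_of_continuous_uncurry _ (by
    simp only [Γ, ContinuousMap.coe_mk]; fun_prop)
  have hint : Integrable (fun y => φ.normed volume y • Γ y) :=
    (φ.continuous_normed.smul hΓ).integrable_of_hasCompactSupport
      φ.hasCompactSupport_normed.smul_right
  have hF' : F = ∫ y, φ.normed volume y • Γ y := by
    ext x
    change F x = ContinuousMap.evalCLM ℝ x (∫ y, φ.normed volume y • Γ y)
    rw [← (ContinuousMap.evalCLM ℝ x).integral_comp_comm hint, hF, convolution_def,
      ← integral_const_mul]
    refine integral_congr_ae (Eventually.of_forall fun y => ?_)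
    simp only [ContinuousLinearMap.lsmul_apply, smul_eq_mul, map_smul, ContinuousMap.evalCLM_apply,
      ContinuousMap.coe_mk, Γ]
    ring
  rw [hF']
  exact S.integral_mem_of_isClosed hS fun y =>
    S.smul_mem _ (h c (θ - y) _ fun x => by simp [Γ, add_sub_assoc])

theorem pow_mem (hS : IsClosed (S : Set C(K, ℝ))) (hg : Continuous g)
    (hgp : ∀ p : Polynomial ℝ, g ≠ fun x => p.eval x) (h : ContainsWeightedShifts S 1 u g)
    (k : ℕ) : u ^ k ∈ S := by
  obtain ⟨φ, θ, hθ⟩ := exists_iteratedDeriv_convolution_ne_zero hg hgp k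
  set d := _root_.iteratedDeriv k (φ.normed volume ⋆[ContinuousLinearMap.lsmul ℝ ℝ] g) θ
  have hmem := (h.convolution hS hg φ).iteratedDeriv hS (φ.contDiff_normed_convolution hg) k 0 θ
    (d • u ^ k) fun x => by simp [d, mul_comm]
  simpa [smul_smul, hθ] using S.smul_mem d⁻¹ hmem

end ContainsWeightedShifts

end ContinuousFunctions

section Ridge

variable {E : Type*} [AddCommGroup E] [Module ℝ E] [TopologicalSpace E]

def ridgeSpan (σ : ℝ → ℝ) (K : Set E) : Submodule ℝ C(K, ℝ) :=
  Submodule.span ℝ {f | ∃ (ℓ : StrongDual ℝ E) (θ : ℝ), ∀ x : K, f x = σ (ℓ x + θ)}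

variable {σ : ℝ → ℝ} {K : Set E}

theorem exp_restrict_mem_closure_ridgeSpan [CompactSpace K] (hσ : Continuous σ)
    (hσp : ∀ p : Polynomial ℝ, σ ≠ fun x => p.eval x) (ℓ : StrongDual ℝ E) :
    NormedSpace.exp ((ℓ : C(E, ℝ)).restrict K) ∈ (ridgeSpan σ K).topologicalClosure := by
  have hshifts : ContainsWeightedShifts (ridgeSpan σ K).topologicalClosure 1
      ((ℓ : C(E, ℝ)).restrict K) σ := fun c θ F hF =>
    (ridgeSpan σ K).le_topologicalClosure (Submodule.subset_span ⟨c • ℓ, θ, fun x => by simp [hF]⟩)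
  exact Submodule.exp_mem_of_forall_pow_mem (ridgeSpan σ K).isClosed_topologicalClosure
    (hshifts.pow_mem (ridgeSpan σ K).isClosed_topologicalClosure hσ hσp)

theorem ridgeSpan_topologicalClosure_eq_top [CompactSpace K] [SeparatingDual ℝ E]
    (hσ : Continuous σ) (hσp : ∀ p : Polynomial ℝ, σ ≠ fun x => p.eval x) :
    (ridgeSpan σ K).topologicalClosure = ⊤ := by
  let e : StrongDual ℝ E → C(K, ℝ) := fun ℓ => NormedSpace.exp ((ℓ : C(E, ℝ)).restrict K)
  have he_apply : ∀ ℓ x, e ℓ x = Real.exp (ℓ x) := fun ℓ x => ContinuousMap.exp_apply _ x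
  -- the span of the `e ℓ` is a subalgebra because `e ℓ * e ℓ' = e (ℓ + ℓ')`
  let A : Subalgebra ℝ C(K, ℝ) := (Submodule.span ℝ (range e)).toSubalgebra
    (Submodule.subset_span ⟨0, by ext; simp [he_apply]⟩) fun f g hf hg => by
      have hfg := Submodule.mul_mem_mul hf hg
      rw [Submodule.span_mul_span] at hfg
      refine Submodule.span_mono ?_ hfg
      rintro _ ⟨_, ⟨ℓ, rfl⟩, _, ⟨ℓ', rfl⟩, rfl⟩
      exact ⟨ℓ + ℓ', by ext; simp [he_apply, Real.exp_add]⟩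
  have hsep : A.SeparatesPoints := fun x y hxy => by
    obtain ⟨ℓ, hℓ⟩ := SeparatingDual.exists_separating_of_ne (R := ℝ) (Subtype.coe_ne_coe.2 hxy)
    exact ⟨e ℓ, ⟨e ℓ, Submodule.subset_span ⟨ℓ, rfl⟩, rfl⟩, by simpa [he_apply] using hℓ⟩
  have hA : (A : Set C(K, ℝ)) ⊆ (ridgeSpan σ K).topologicalClosure :=
    Submodule.span_le.2 (range_subset_iff.2 (exp_restrict_mem_closure_ridgeSpan hσ hσp))
  refine eq_top_iff.2 fun f _ => closure_minimal hA (ridgeSpan σ K).isClosed_topologicalClosure ?_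
  rw [← Subalgebra.topologicalClosure_coe,
    ContinuousMap.subalgebra_topologicalClosure_eq_top_of_separatesPoints A hsep]
  trivial

theorem exists_sum_ridge_approx [SeparatingDual ℝ E] (hσ : Continuous σ)
    (hσp : ∀ p : Polynomial ℝ, σ ≠ fun x => p.eval x) (hK : IsCompact K)
    {f : E → ℝ} (hf : ContinuousOn f K) {ε : ℝ} (hε : 0 < ε) :
    ∃ (r : ℕ) (c : Fin r → ℝ) (ℓ : Fin r → StrongDual ℝ E) (θ : Fin r → ℝ),
      ∀ x ∈ K, |∑ j, c j * σ (ℓ j x + θ j) - f x| < ε := by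
  have := isCompact_iff_compactSpace.1 hK
  let F : C(K, ℝ) := ⟨K.domRestrict f, hf.domRestrict⟩
  have hF : F ∈ (ridgeSpan σ K).topologicalClosure := by
    rw [ridgeSpan_topologicalClosure_eq_top hσ hσp]; trivial
  obtain ⟨g, hg, hFg⟩ := Metric.mem_closure_iff.1 hF ε hε
  obtain ⟨r, c, G, rfl⟩ := Submodule.mem_span_set'.1 hg
  choose ℓ θ hG using fun j => (G j).2
  refine ⟨r, c, ℓ, θ, fun x hx => ?_⟩
  have := (ContinuousMap.dist_apply_le_dist ⟨x, hx⟩).trans_lt (dist_comm F _ ▸ hFg)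
  simpa [F, hG, Real.dist_eq, Set.domRestrict] using this

end Ridge

theorem exists_network_eq_sum {m n : ℕ} (σ : ℝ → ℝ) {r : Fin n → ℕ} (c : ∀ k, Fin (r k) → ℝ)
    (ℓ : ∀ k, Fin (r k) → StrongDual ℝ (Fin m → ℝ)) (θ : ∀ k, Fin (r k) → ℝ) :
    ∃ (p : ℕ) (A : Matrix (Fin p) (Fin m) ℝ) (b : Fin p → ℝ) (C : Matrix (Fin n) (Fin p) ℝ),
      ∀ a k, C.mulVec (fun i => σ (A.mulVec a i + b i)) k = ∑ j, c k j * σ (ℓ k j a + θ k j) := by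
  -- the hidden units of the `n` one-output networks, side by side
  let e := Fintype.equivFin (Σ k, Fin (r k))
  refine ⟨_, Matrix.of fun i q => ℓ (e.symm i).1 (e.symm i).2 (Pi.single q 1),
    fun i => θ (e.symm i).1 (e.symm i).2,
    Matrix.of fun k i => if (e.symm i).1 = k then c (e.symm i).1 (e.symm i).2 else 0, ?_⟩
  intro a k
  have hℓ : ∀ (k : Fin n) (j : Fin (r k)), ∑ q, ℓ k j (Pi.single q 1) * a q = ℓ k j a := by
    intro k j
    conv_rhs => rw [← Finset.univ_sum_single a]
    rw [map_sum]
    refine Finset.sum_congr rfl fun q _ => ?_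
    rw [mul_comm, ← smul_eq_mul, ← map_smul, ← Pi.single_smul', smul_eq_mul, mul_one]
  simp only [Matrix.mulVec, dotProduct, Matrix.of_apply, hℓ]
  rw [Fintype.sum_equiv e.symm _ (fun s => (if s.1 = k then c s.1 s.2 else 0) *
    σ (ℓ s.1 s.2 a + θ s.1 s.2)) fun _ => rfl, Fintype.sum_sigma]
  simp [ite_mul, Finset.sum_ite_eq']

theorem stmt10_general (m n : ℕ) (M : ℝ)
    (Φ : (Fin m → ℝ) → (Fin n → ℝ)) (hΦ : Continuous Φ)
    (σ : ℝ → ℝ) (hσc : Continuous σ)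
    (hσp : ∀ p : Polynomial ℝ, σ ≠ fun x => p.eval x)
    (ε : ℝ) (hε : 0 < ε) :
    ∃ (p : ℕ) (A : Matrix (Fin p) (Fin m) ℝ) (b : Fin p → ℝ)
      (C : Matrix (Fin n) (Fin p) ℝ),
      ∀ a : Fin m → ℝ, (∀ i, a i ∈ Set.Icc (-M) M) →
        ∀ k, |C.mulVec (fun i => σ (A.mulVec a i + b i)) k - Φ a k| < ε := by
  have hbox : IsCompact (univ.pi fun _ : Fin m => Icc (-M) M) :=
    isCompact_univ_pi fun _ => isCompact_Icc
  choose r c ℓ θ happrox using fun k : Fin n =>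
    exists_sum_ridge_approx hσc hσp hbox ((continuous_apply k).comp hΦ).continuousOn hε
  obtain ⟨p, A, b, C, hnet⟩ := exists_network_eq_sum σ c ℓ θ
  exact ⟨p, A, b, C, fun a ha k => hnet a k ▸ happrox k a fun i _ => ha i⟩

theorem stmt10 (m n : ℕ) (M : ℝ) (hM : 0 < M)
    (Φ : (Fin m → ℝ) → (Fin n → ℝ)) (hΦ : Continuous Φ)
    (σ : ℝ → ℝ) (hσc : Continuous σ)
    (hσp : ∀ p : Polynomial ℝ, σ ≠ fun x => p.eval x)
    (ε : ℝ) (hε : 0 < ε) :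
    ∃ (p : ℕ) (A : Matrix (Fin p) (Fin m) ℝ) (b : Fin p → ℝ)
      (C : Matrix (Fin n) (Fin p) ℝ),
      ∀ a : Fin m → ℝ, (∀ i, a i ∈ Set.Icc (-M) M) →
        ∀ k, |C.mulVec (fun i => σ (A.mulVec a i + b i)) k - Φ a k| < ε :=
  stmt10_general m n M Φ hΦ σ hσc hσp ε hε
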